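/- In the all-eligible IRS model (every device eligible for every job, devices arriving at constant rate r so the k-th device arrives at time k/r), the assignment that serves jobs one at a time in nondecreasing order of demand, giving job in position i the devices numbered Σ_{j<i} D_{σ(j)}+1 through Σ_{j≤i} D_{σ(j)}, achieves the minimum possible sum of completion times Σ_j T_j among all feasible assignments. -/
import Mathlib


theorem stmt7 (m : ℕ) (D : Fin m → ℕ) (hD : ∀ j, 0 < D j) (r : ℝ) (hr : 0 < r)
    -- `σ` orders jobs by nondecreasing demand
    (σ : Equiv.Perm (Fin m)) (hσ : Monotone (fun i => D (σ i)))
    -- the shortest-demand-first sequential assignment: job in position `i` gets the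
    -- devices numbered `∑_{l<i} D (σ l)` through `∑_{l≤i} D (σ l) - 1` (0-indexed;
    -- device `k` arrives at time `(k+1)/r`)
    (A : Fin m → Finset ℕ)
    (hA : ∀ j, A j = Finset.Ico (∑ l ∈ Finset.Iio (σ.symm j), D (σ l))
                                (∑ l ∈ Finset.Iic (σ.symm j), D (σ l)))
    -- any other feasible assignment
    (A' : Fin m → Finset ℕ)
    (hdisj : ∀ j j', j ≠ j' → Disjoint (A' j) (A' j'))
    (hcard : ∀ j, (A' j).card = D j) :
    ∑ j, (((A j).sup (fun k => k + 1) : ℕ) : ℝ) / r ≤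
      ∑ j, (((A' j).sup (fun k => k + 1) : ℕ) : ℝ) / r := by
  classical
  set T' : Fin m → ℕ := fun j => (A' j).sup (fun k => k + 1) with hT'
  -- compute the sup over the Ico interval
  have hsup : ∀ j, (A j).sup (fun k => k + 1) = ∑ l ∈ Finset.Iic (σ.symm j), D (σ l) := by
    intro j
    rw [hA j]
    set a := ∑ l ∈ Finset.Iio (σ.symm j), D (σ l) with ha
    set b := ∑ l ∈ Finset.Iic (σ.symm j), D (σ l) with hb
    have hab : a < b := by
      have hb' : b = D (σ (σ.symm j)) + a := by
        rw [hb, ← Finset.Iio_insert, Finset.sum_insert (by simp)]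
      have := hD (σ (σ.symm j))
      omega
    apply le_antisymm
    · exact Finset.sup_le fun k hk => (Finset.mem_Ico.mp hk).2
    · have hmem : b - 1 ∈ Finset.Ico a b := by rw [Finset.mem_Ico]; omega
      have h2 : b - 1 + 1 ≤ (Finset.Ico a b).sup (fun k => k + 1) :=
        Finset.le_sup (f := fun k => k + 1) hmem
      omega
  -- sorting permutation for T'
  set τ : Equiv.Perm (Fin m) := Tuple.sort T' with hτ
  have hτmono : Monotone (T' ∘ τ) := Tuple.monotone_sort T'
  -- per-index lower bound on completion times of A'
  have hbound : ∀ i : Fin m, ∑ l ∈ Finset.Iic i, D (τ l) ≤ T' (τ i) := by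
    intro i
    calc ∑ l ∈ Finset.Iic i, D (τ l)
        = ((Finset.Iic i).biUnion (fun l => A' (τ l))).card := by
          rw [Finset.card_biUnion]
          · exact (Finset.sum_congr rfl fun l _ => (hcard (τ l)).symm)
          · intro x _ y _ hxy
            exact hdisj _ _ (fun h => hxy (τ.injective h))
      _ ≤ (Finset.range (T' (τ i))).card := by
          apply Finset.card_le_card
          intro k hk
          rw [Finset.mem_biUnion] at hk
          obtain ⟨l, hl, hkl⟩ := hk
          have h1 : k + 1 ≤ T' (τ l) := Finset.le_sup (f := fun k => k + 1) hkl
          have h2 : T' (τ l) ≤ T' (τ i) := hτmono (Finset.mem_Iic.mp hl)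
          rw [Finset.mem_range]; omega
      _ = T' (τ i) := Finset.card_range _
  -- sum swap
  have hswap : ∀ (f : Fin m → ℕ), ∑ i, ∑ l ∈ Finset.Iic i, f l
      = ∑ l, (Finset.Ici l).card * f l := by
    intro f
    rw [Finset.sum_comm' (t' := (Finset.univ : Finset (Fin m))) (s' := fun l => Finset.Ici l)
      (by simp)]
    simp [Finset.sum_const, mul_comm]
  -- rearrangement inequality (in ℝ, then cast back)
  have hrearr : ∑ i, ∑ l ∈ Finset.Iic i, D (σ l) ≤ ∑ i, ∑ l ∈ Finset.Iic i, D (τ l) := by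
    rw [hswap, hswap]
    have hanti : Antivary (fun l : Fin m => ((Finset.Ici l).card : ℝ))
        (fun l => (D (σ l) : ℝ)) := by
      intro i j hij
      have hij0 : (D (σ i) : ℝ) < (D (σ j) : ℝ) := hij
      have hij' : D (σ i) < D (σ j) := by exact_mod_cast hij0
      have hlt : i < j := by
        by_contra h
        push_neg at h
        exact absurd (hσ h) (not_le.mpr hij')
      exact_mod_cast Nat.cast_le.mpr (Finset.card_le_card (Finset.Ici_subset_Ici.mpr hlt.le))
    have key := hanti.sum_smul_le_sum_smul_comp_perm (σ := τ.trans σ.symm)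
    simp only [smul_eq_mul, Equiv.trans_apply, Equiv.apply_symm_apply] at key
    have : (∑ l, ((Finset.Ici l).card * D (σ l) : ℕ) : ℝ)
        ≤ (∑ l, ((Finset.Ici l).card * D (τ l) : ℕ) : ℝ) := by
      push_cast
      exact key
    exact_mod_cast this
  -- assemble in ℕ
  have hmain : ∑ j, (A j).sup (fun k => k + 1) ≤ ∑ j, T' j := by
    calc ∑ j, (A j).sup (fun k => k + 1)
        = ∑ j, ∑ l ∈ Finset.Iic (σ.symm j), D (σ l) := Finset.sum_congr rfl fun j _ => hsup j
      _ = ∑ i, ∑ l ∈ Finset.Iic i, D (σ l) := by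
          rw [← Equiv.sum_comp σ (fun j => ∑ l ∈ Finset.Iic (σ.symm j), D (σ l))]
          simp
      _ ≤ ∑ i, ∑ l ∈ Finset.Iic i, D (τ l) := hrearr
      _ ≤ ∑ i, T' (τ i) := Finset.sum_le_sum fun i _ => hbound i
      _ = ∑ j, T' j := Equiv.sum_comp τ T'
  rw [← Finset.sum_div, ← Finset.sum_div, ← Nat.cast_sum, ← Nat.cast_sum]
  gcongr
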